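/- With X^j the position sequence of letter j in the k-bonacci word and Δ^j = X^{j+1} − X^j (termwise) for 0 ≤ j ≤ k−2, the sets of values of Δ^0, Δ^1, …, Δ^{k−2} form a partition of the positive integers. -/
import Mathlib


/-- The k-bonacci substitution on the alphabet {0,…,k−1}. -/
def subW (k : ℕ) (w : List ℕ) : List ℕ :=
  w.flatMap (fun j => if j + 1 < k then [0, j + 1] else [0])

/-- The k-bonacci word (0-indexed). -/
def kbonacci (k n : ℕ) : ℕ := ((subW k)^[n + 1] [0]).getD n 0

/-- X^j_n: the 1-based position of the n-th (1-based) occurrence of letter j. -/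
noncomputable def Xpos (k j n : ℕ) : ℕ :=
  Nat.nth (fun m => kbonacci k m = j) (n - 1) + 1

/-- Δ^j_n = X^{j+1}_n − X^j_n. -/
noncomputable def Δrow (k j n : ℕ) : ℕ := Xpos k (j + 1) n - Xpos k j n

namespace KB

instance (k j : ℕ) : DecidablePred (fun i => kbonacci k i = j) := fun _ => Nat.decEq _ _
instance (k : ℕ) : DecidablePred (fun i => kbonacci k i + 1 < k) := fun _ => Nat.decLt _ _

lemma subW_append (k : ℕ) (a b : List ℕ) : subW k (a ++ b) = subW k a ++ subW k b := by
  simp [subW]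

lemma subW_cons (k x : ℕ) (t : List ℕ) :
    subW k (x :: t) = (if x + 1 < k then [0, x + 1] else [0]) ++ subW k t := by
  simp [subW]

lemma subW_prefix (k : ℕ) {a b : List ℕ} (h : a <+: b) : subW k a <+: subW k b := by
  obtain ⟨t, rfl⟩ := h
  exact ⟨subW k t, (subW_append k a t).symm⟩

lemma length_le_subW (k : ℕ) (a : List ℕ) : a.length ≤ (subW k a).length := by
  induction a with
  | nil => simp [subW]
  | cons x t ih =>
    rw [subW_cons]
    simp only [List.length_append, List.length_cons]
    split <;> simp <;> omega

def W (k m : ℕ) : List ℕ := (subW k)^[m] [0]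

lemma W_succ (k m : ℕ) : W k (m+1) = subW k (W k m) := Function.iterate_succ_apply' _ _ _

lemma W_head (k : ℕ) (hk : 2 ≤ k) (m : ℕ) : ∃ t, W k m = 0 :: t := by
  induction m with
  | zero => exact ⟨[], rfl⟩
  | succ m ih =>
    obtain ⟨t, ht⟩ := ih
    refine ⟨1 :: subW k t, ?_⟩
    rw [W_succ, ht, subW_cons, if_pos (by omega)]
    rfl

lemma W_length (k : ℕ) (hk : 2 ≤ k) (m : ℕ) : m + 1 ≤ (W k m).length := by
  induction m with
  | zero => simp [W]
  | succ m ih =>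
    obtain ⟨t, ht⟩ := W_head k hk m
    have h2 := length_le_subW k t
    rw [W_succ, ht, subW_cons, if_pos (by omega)]
    rw [ht] at ih
    simp only [List.length_append, List.length_cons] at *
    omega

lemma W_prefix (k : ℕ) (hk : 2 ≤ k) {a b : ℕ} (h : a ≤ b) : W k a <+: W k b := by
  induction b with
  | zero => simp_all
  | succ b ih =>
    rcases Nat.eq_or_lt_of_le h with rfl | h'
    · exact List.prefix_refl _
    have hb : W k b <+: W k (b+1) := by
      clear h h' ih
      induction b with
      | zero =>
        have h01 : subW k [0] = [0, 1] := by
          rw [subW_cons, if_pos (by omega)]; rfl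
        rw [W_succ]
        show [0] <+: subW k [0]
        rw [h01]
        exact ⟨[1], rfl⟩
      | succ b ih2 => rw [W_succ, W_succ]; exact subW_prefix k ih2
    exact (ih (by omega)).trans hb

def Sk (k n : ℕ) : ℕ := n + Nat.count (fun i => kbonacci k i + 1 < k) n

lemma Sk_succ (k n : ℕ) :
    Sk k (n+1) = Sk k n + (if kbonacci k n + 1 < k then 2 else 1) := by
  simp only [Sk, Nat.count_succ]
  split <;> omega

lemma Sk_strictMono (k : ℕ) : StrictMono (Sk k) := by
  apply strictMono_nat_of_lt_succ
  intro n
  rw [Sk_succ]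
  split <;> omega

lemma W_get (k : ℕ) (hk : 2 ≤ k) {m n : ℕ} (h : n < (W k m).length) :
    (W k m)[n] = kbonacci k n := by
  have hlen : n + 1 < (W k (n+1)).length := W_length k hk (n+1)
  have hkb : kbonacci k n = (W k (n+1))[n]'(by omega) := by
    show ((subW k)^[n+1] [0]).getD n 0 = _
    rw [List.getD_eq_getElem]
    rfl
  rcases le_total m (n+1) with hm | hm
  · exact ((W_prefix k hk hm).getElem h).trans hkb.symm
  · rw [hkb]
    exact ((W_prefix k hk hm).getElem (by omega)).symm

def M (k n : ℕ) : List ℕ := (List.range n).map (kbonacci k)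

lemma M_prefix (k : ℕ) (hk : 2 ≤ k) {n m : ℕ} (h : n ≤ m) : M k n <+: W k m := by
  have hlen : n ≤ (W k m).length := le_trans (by omega) (W_length k hk m)
  have : M k n = (W k m).take n := by
    apply List.ext_getElem
    · simp [M, hlen]
    · intro i h1 h2
      simp only [M, List.getElem_map, List.getElem_range, List.getElem_take]
      simp only [M, List.length_map, List.length_range] at h1
      exact (W_get k hk (by omega)).symm
  rw [this]
  exact List.take_prefix _ _

lemma length_subW_M (k n : ℕ) : (subW k (M k n)).length = Sk k n := by
  induction n with
  | zero => simp [M, subW, Sk]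
  | succ n ih =>
    rw [M, List.range_succ, List.map_append, subW_append]
    simp only [List.length_append]
    rw [show (List.range n).map (kbonacci k) = M k n from rfl, ih, Sk_succ]
    simp only [List.map_cons, List.map_nil, subW_cons]
    split <;> simp [subW]

lemma fix_block (k : ℕ) (hk : 2 ≤ k) (n : ℕ) :
    kbonacci k (Sk k n) = 0 ∧
      (kbonacci k n + 1 < k → kbonacci k (Sk k n + 1) = kbonacci k n + 1) := by
  have hMpre : subW k (M k (n+1)) <+: W k (n+2) := by
    rw [W_succ]
    exact subW_prefix k (M_prefix k hk (le_refl (n+1)))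
  have hsplit : subW k (M k (n+1)) =
      subW k (M k n) ++ (if kbonacci k n + 1 < k then [0, kbonacci k n + 1] else [0]) := by
    rw [M, List.range_succ, List.map_append, subW_append]
    congr 1
    simp [subW_cons, subW]
  have hlenM : (subW k (M k n)).length = Sk k n := length_subW_M k n
  have hlenM1 : (subW k (M k (n+1))).length = Sk k (n+1) := length_subW_M k (n+1)
  have hSs := Sk_succ k n
  have key : ∀ i (hi : i < (subW k (M k (n+1))).length),
      kbonacci k i = (subW k (M k (n+1)))[i] := by
    intro i hi
    have hlt : i < (W k (n+2)).length := lt_of_lt_of_le hi hMpre.length_le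
    rw [← W_get k hk hlt]
    exact (hMpre.getElem hi).symm
  constructor
  · have hi : Sk k n < (subW k (M k (n+1))).length := by rw [hlenM1]; split at hSs <;> omega
    rw [key _ hi]
    simp only [hsplit]
    rw [List.getElem_append_right (by omega)]
    simp only [hlenM, Nat.sub_self]
    split <;> rfl
  · intro hq
    have hi : Sk k n + 1 < (subW k (M k (n+1))).length := by
      rw [hlenM1]; rw [if_pos hq] at hSs; omega
    rw [key _ hi]
    simp only [hsplit]
    rw [List.getElem_append_right (by omega)]
    simp only [hlenM, Nat.add_sub_cancel_left]
    simp [hq]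

lemma kbonacci_lt (k : ℕ) (hk : 2 ≤ k) (n : ℕ) : kbonacci k n < k := by
  have hmem : ∀ m, ∀ x ∈ W k m, x < k := by
    intro m
    induction m with
    | zero =>
      intro x hx
      simp only [W, Function.iterate_zero, id, List.mem_singleton] at hx
      omega
    | succ m ih =>
      rw [W_succ]
      intro x hx
      simp only [subW, List.mem_flatMap] at hx
      obtain ⟨a, _, hx⟩ := hx
      split at hx <;> simp at hx <;> omega
  have hlen : n < (W k (n+1)).length := by have := W_length k hk (n+1); omega
  rw [← W_get k hk hlen]
  exact hmem (n+1) _ (List.getElem_mem hlen)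

lemma Sk_cover (k : ℕ) (i : ℕ) : ∃ n, Sk k n ≤ i ∧ i < Sk k (n+1) := by
  induction i with
  | zero =>
    refine ⟨0, le_refl _, ?_⟩
    have := Sk_succ k 0
    have h0 : Sk k 0 = 0 := by simp [Sk]
    split at this <;> omega
  | succ i ih =>
    obtain ⟨n, h1, h2⟩ := ih
    rcases Nat.lt_or_ge (i+1) (Sk k (n+1)) with h | h
    · exact ⟨n, by omega, h⟩
    · refine ⟨n+1, by omega, ?_⟩
      have := Sk_succ k (n+1)
      split at this <;> omega

lemma char_zero (k : ℕ) (hk : 2 ≤ k) (i : ℕ) :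
    kbonacci k i = 0 ↔ ∃ n, i = Sk k n := by
  constructor
  · intro h
    obtain ⟨n, h1, h2⟩ := Sk_cover k i
    have hS := Sk_succ k n
    by_cases hq : kbonacci k n + 1 < k
    · rw [if_pos hq] at hS
      rcases (by omega : i = Sk k n ∨ i = Sk k n + 1) with h3 | h3
      · exact ⟨n, h3⟩
      · exfalso
        have := (fix_block k hk n).2 hq
        rw [h3, this] at h
        omega
    · rw [if_neg hq] at hS
      exact ⟨n, by omega⟩
  · rintro ⟨n, rfl⟩
    exact (fix_block k hk n).1

lemma char_succ (k : ℕ) (hk : 2 ≤ k) (j : ℕ) (hj : j + 1 < k) (i : ℕ) :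
    kbonacci k i = j + 1 ↔ ∃ n, kbonacci k n = j ∧ i = Sk k n + 1 := by
  constructor
  · intro h
    obtain ⟨n, h1, h2⟩ := Sk_cover k i
    have hS := Sk_succ k n
    have h0 := (fix_block k hk n).1
    by_cases hq : kbonacci k n + 1 < k
    · rw [if_pos hq] at hS
      rcases (by omega : i = Sk k n ∨ i = Sk k n + 1) with h3 | h3
      · exfalso; rw [h3, h0] at h; omega
      · have := (fix_block k hk n).2 hq
        rw [h3, this] at h
        exact ⟨n, by omega, h3⟩
    · rw [if_neg hq] at hS
      have h3 : i = Sk k n := by omega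
      exfalso; rw [h3, h0] at h; omega
  · rintro ⟨n, hn, rfl⟩
    have := (fix_block k hk n).2 (by omega)
    rw [this, hn]

lemma inf_p (k : ℕ) (hk : 2 ≤ k) : ∀ j, j < k → {i | kbonacci k i = j}.Infinite := by
  intro j
  induction j with
  | zero =>
    intro _
    apply Set.infinite_of_injective_forall_mem (f := Sk k) (Sk_strictMono k).injective
    intro n
    exact (fix_block k hk n).1
  | succ j ih =>
    intro hj
    have hpj := ih (by omega)
    apply Set.infinite_of_injective_forall_mem
      (f := fun n => Sk k (Nat.nth (fun i => kbonacci k i = j) n) + 1)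
    · intro a b hab
      simp only [add_left_inj] at hab
      exact Nat.nth_injective hpj ((Sk_strictMono k).injective hab)
    · intro n
      exact (char_succ k hk j hj _).2
        ⟨Nat.nth (fun i => kbonacci k i = j) n, Nat.nth_mem_of_infinite hpj n, rfl⟩

lemma inf_q (k : ℕ) (hk : 2 ≤ k) : {i | kbonacci k i + 1 < k}.Infinite := by
  apply (inf_p k hk 0 (by omega)).mono
  intro i hi
  simp only [Set.mem_setOf_eq] at *
  omega

lemma count_shift (k : ℕ) (hk : 2 ≤ k) (j : ℕ) (hj : j + 1 < k) (u : ℕ) :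
    Nat.count (fun i => kbonacci k i = j + 1) (Sk k u + 1)
      = Nat.count (fun i => kbonacci k i = j) u := by
  rw [Nat.count_eq_card_filter_range, Nat.count_eq_card_filter_range]
  symm
  apply Finset.card_bij (fun n _ => Sk k n + 1)
  · intro a ha
    simp only [Finset.mem_filter, Finset.mem_range] at *
    refine ⟨by have := Sk_strictMono k ha.1; omega, ?_⟩
    exact (char_succ k hk j hj _).2 ⟨a, ha.2, rfl⟩
  · intro a _ b _ hab
    exact (Sk_strictMono k).injective (by omega)
  · intro b hb
    simp only [Finset.mem_filter, Finset.mem_range] at hb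
    obtain ⟨n, hn, rfl⟩ := (char_succ k hk j hj b).1 hb.2
    refine ⟨n, ?_, rfl⟩
    simp only [Finset.mem_filter, Finset.mem_range]
    exact ⟨(Sk_strictMono k).lt_iff_lt.1 (by omega), hn⟩

lemma nth_shift (k : ℕ) (hk : 2 ≤ k) (j : ℕ) (hj : j + 1 < k) (t : ℕ) :
    Nat.nth (fun i => kbonacci k i = j + 1) t
      = Sk k (Nat.nth (fun i => kbonacci k i = j) t) + 1 := by
  have hpj : {i | kbonacci k i = j}.Infinite := inf_p k hk j (by omega)
  set u := Nat.nth (fun i => kbonacci k i = j) t with hu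
  have hmem : kbonacci k u = j := Nat.nth_mem_of_infinite hpj t
  have h1 : kbonacci k (Sk k u + 1) = j + 1 :=
    (char_succ k hk j hj _).2 ⟨u, hmem, rfl⟩
  have h2 := Nat.nth_count (p := fun i => kbonacci k i = j + 1) h1
  rwa [count_shift k hk j hj, hu, Nat.count_nth_of_infinite hpj] at h2

lemma delta_eq (k : ℕ) (hk : 2 ≤ k) (j : ℕ) (hj : j + 1 < k) (n : ℕ) :
    Δrow k j n = Nat.count (fun i => kbonacci k i + 1 < k)
      (Nat.nth (fun i => kbonacci k i = j) (n - 1) + 1) := by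
  have hpj : {i | kbonacci k i = j}.Infinite := inf_p k hk j (by omega)
  set u := Nat.nth (fun i => kbonacci k i = j) (n - 1) with hu
  have hmem : kbonacci k u = j := Nat.nth_mem_of_infinite hpj (n - 1)
  have hq : kbonacci k u + 1 < k := by omega
  unfold Δrow Xpos
  rw [nth_shift k hk j hj, ← hu]
  have hS : Sk k u = u + Nat.count (fun i => kbonacci k i + 1 < k) u := rfl
  have hc : Nat.count (fun i => kbonacci k i + 1 < k) (u + 1)
      = Nat.count (fun i => kbonacci k i + 1 < k) u + 1 := by
    rw [Nat.count_succ, if_pos hq]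
  omega

lemma mem_delta_iff (k : ℕ) (hk : 2 ≤ k) (j : ℕ) (hj : j + 1 < k) (m : ℕ) (hm : 0 < m) :
    (∃ n, 1 ≤ n ∧ Δrow k j n = m) ↔
      kbonacci k (Nat.nth (fun i => kbonacci k i + 1 < k) (m - 1)) = j := by
  have hpj : {i | kbonacci k i = j}.Infinite := inf_p k hk j (by omega)
  have hqinf := inf_q k hk
  constructor
  · rintro ⟨n, hn, rfl⟩
    have hmem : kbonacci k (Nat.nth (fun i => kbonacci k i = j) (n-1)) = j :=
      Nat.nth_mem_of_infinite hpj (n-1)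
    set u := Nat.nth (fun i => kbonacci k i = j) (n - 1) with hu
    have hq : kbonacci k u + 1 < k := by omega
    rw [delta_eq k hk j hj n, ← hu]
    have hc : Nat.count (fun i => kbonacci k i + 1 < k) (u + 1)
        = Nat.count (fun i => kbonacci k i + 1 < k) u + 1 := by
      rw [Nat.count_succ, if_pos hq]
    rw [hc]
    have := Nat.nth_count (p := fun i => kbonacci k i + 1 < k) hq
    simp only [Nat.add_sub_cancel]
    rw [this, hmem]
  · intro h
    set i := Nat.nth (fun i => kbonacci k i + 1 < k) (m - 1) with hi
    have hqi : kbonacci k i + 1 < k := Nat.nth_mem_of_infinite hqinf (m - 1)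
    refine ⟨Nat.count (fun i' => kbonacci k i' = j) i + 1, by omega, ?_⟩
    rw [delta_eq k hk j hj]
    simp only [Nat.add_sub_cancel]
    rw [Nat.nth_count (p := fun i' => kbonacci k i' = j) h]
    rw [Nat.count_succ, if_pos hqi, hi, Nat.count_nth_of_infinite hqinf]
    omega

lemma delta_pos (k : ℕ) (hk : 2 ≤ k) (j : ℕ) (hj : j + 1 < k) (n : ℕ) : 0 < Δrow k j n := by
  have hpj := inf_p k hk j (by omega)
  have hmem : kbonacci k (Nat.nth (fun i => kbonacci k i = j) (n-1)) = j :=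
    Nat.nth_mem_of_infinite hpj (n-1)
  rw [delta_eq k hk j hj n, Nat.count_succ,
    if_pos (by omega : kbonacci k (Nat.nth (fun i => kbonacci k i = j) (n-1)) + 1 < k)]
  omega

end KB

/-- The value sets of Δ^0, …, Δ^{k−2} form a partition of the positive integers:
they are pairwise disjoint and their union is all of ℕ \ {0}. -/
theorem delta_rows_partition (k : ℕ) (hk : 2 ≤ k) :
    (⋃ j ∈ Set.Iio (k - 1), {m | ∃ n, 1 ≤ n ∧ Δrow k j n = m}) = {m : ℕ | 0 < m} ∧
    (∀ i < k - 1, ∀ j < k - 1, i ≠ j →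
      Disjoint {m | ∃ n, 1 ≤ n ∧ Δrow k i n = m}
               {m | ∃ n, 1 ≤ n ∧ Δrow k j n = m}) := by
  constructor
  · ext m
    simp only [Set.mem_iUnion, Set.mem_setOf_eq, Set.mem_Iio, exists_prop]
    constructor
    · rintro ⟨j, hj, n, hn, rfl⟩
      exact KB.delta_pos k hk j (by omega) n
    · intro hm
      have hqinf := KB.inf_q k hk
      have hqi : kbonacci k (Nat.nth (fun i => kbonacci k i + 1 < k) (m - 1)) + 1 < k :=
        Nat.nth_mem_of_infinite hqinf (m - 1)
      refine ⟨kbonacci k (Nat.nth (fun i => kbonacci k i + 1 < k) (m - 1)), by omega, ?_⟩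
      exact (KB.mem_delta_iff k hk _ (by omega) m hm).2 rfl
  · intro i hi j hj hne
    rw [Set.disjoint_left]
    rintro m hmi hmj
    have hm : 0 < m := by
      obtain ⟨n, hn, rfl⟩ := hmi
      exact KB.delta_pos k hk i (by omega) n
    exact hne (((KB.mem_delta_iff k hk i (by omega) m hm).1 hmi).symm.trans
      ((KB.mem_delta_iff k hk j (by omega) m hm).1 hmj))
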